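/- arXiv:2102.08636 — 3 statements merged into one kernel-verified Lean document; each statement's English description precedes it below -/
import Mathlib

section
/- Let z_0 > 0, p > 1, let n be a natural number, and let B_j = B(2^j z_0, 2^j z_0) \subset \mathbb{C} for j = 0,...,n. Define \rho_0 : \mathbb{C} \to [0,\infty) by \rho_0(z) = 2/(2^j z_0) on B_j \setminus B_{j-1} (with B_{-1} = \emptyset) and \rho_0 = 0 outside B_n. Then \int_{\mathbb{C}} \rho_0(z)^{2p/(p-1)} dA(z) \le c_p \, z_0^{-2/(p-1)}, where c_p = 4^{p/(p-1)} \pi / (1 - 2^{-2/(p-1)}). -/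
/-!
On `B j \ B (j - 1)` the weight `ρ₀ ^ q`, `q = 2p/(p-1) > 2`, equals `(2 / (2ʲ z₀)) ^ q`, so it is
dominated by `∑ⱼ (2 / (2ʲ z₀)) ^ q · 𝟙_{B j}`. Integrating, the `j`-th term contributes
`π (2ʲ z₀)² (2 / (2ʲ z₀)) ^ q = 2^q π z₀^(2-q) · (2^(2-q))ʲ`, and since `2 - q < 0` the geometric
series sums to at most `2^q π z₀^(2-q) / (1 - 2^(2-q))`, which is the claimed constant.
-/

open MeasureTheory Complex

def IsLayered {α β : Type*} [Zero β] (B : ℕ → Set α) (n : ℕ) (c : ℕ → β) (ρ : α → β) : Prop :=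
  (∀ z ∈ B 0, ρ z = c 0) ∧ (∀ j, 1 ≤ j → j ≤ n → ∀ z ∈ B j \ B (j - 1), ρ z = c j) ∧
    ∀ z ∉ B n, ρ z = 0

namespace IsLayered

variable {α β γ : Type*} [Zero β] {B : ℕ → Set α} {n : ℕ} {c : ℕ → β} {ρ : α → β}

theorem comp [Zero γ] (h : IsLayered B n c ρ) {f : β → γ} (hf : f 0 = 0) :
    IsLayered B n (f ∘ c) (f ∘ ρ) := by
  obtain ⟨h₀, hj, hout⟩ := h
  refine ⟨fun z hz => ?_, fun j h₁ h₂ z hz => ?_, fun z hz => ?_⟩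
  · simp only [Function.comp, h₀ z hz]
  · simp only [Function.comp, hj j h₁ h₂ z hz]
  · simp only [Function.comp, hout z hz, hf]

/-- The value at `z ∈ B n` is read off the first `B k` containing `z`. -/
theorem exists_eq (h : IsLayered B n c ρ) {z : α} (hz : z ∈ B n) :
    ∃ k ≤ n, z ∈ B k ∧ ρ z = c k := by
  classical
  have hex : ∃ k, z ∈ B k := ⟨n, hz⟩
  refine ⟨Nat.find hex, Nat.find_min' hex hz, Nat.find_spec hex, ?_⟩
  rcases Nat.eq_zero_or_pos (Nat.find hex) with hk | hk
  · rw [hk]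
    exact h.1 z (hk ▸ Nat.find_spec hex)
  · exact h.2.1 _ hk (Nat.find_min' hex hz) z
      ⟨Nat.find_spec hex, Nat.find_min hex (Nat.sub_lt hk one_pos)⟩

theorem nonneg {ρ : α → ℝ} {c : ℕ → ℝ} (h : IsLayered B n c ρ) (hc : ∀ j, 0 ≤ c j) (z : α) :
    0 ≤ ρ z := by
  by_cases hz : z ∈ B n
  · obtain ⟨k, -, -, hk⟩ := h.exists_eq hz
    exact hk ▸ hc k
  · exact (h.2.2 z hz).ge

theorem le_sum_indicator {ρ : α → ℝ} {c : ℕ → ℝ} (h : IsLayered B n c ρ) (hc : ∀ j, 0 ≤ c j)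
    (z : α) : ρ z ≤ ∑ j ∈ Finset.range (n + 1), (B j).indicator (fun _ => c j) z := by
  have hterm : ∀ j, 0 ≤ (B j).indicator (fun _ => c j) z :=
    fun j => Set.indicator_nonneg (fun _ _ => hc j) z
  by_cases hz : z ∈ B n
  · obtain ⟨k, hkn, hzk, hk⟩ := h.exists_eq hz
    calc ρ z = (B k).indicator (fun _ => c k) z := by rw [hk, Set.indicator_of_mem hzk]
      _ ≤ _ := Finset.single_le_sum (fun j _ => hterm j)
          (Finset.mem_range.2 (Nat.lt_succ_of_le hkn))
  · exact (h.2.2 z hz).le.trans (Finset.sum_nonneg fun j _ => hterm j)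

end IsLayered

section IndicatorSum

variable {X ι E : Type*} [MeasurableSpace X] {μ : Measure X} [NormedAddCommGroup E]
  {S : ι → Set X}

theorem integrable_finset_sum_indicator_const (s : Finset ι) (hS : ∀ i, MeasurableSet (S i))
    (hμS : ∀ i, μ (S i) ≠ ⊤) (c : ι → E) :
    Integrable (fun x => ∑ i ∈ s, (S i).indicator (fun _ => c i) x) μ :=
  integrable_finsetSum s fun i _ =>
    (integrable_indicator_iff (hS i)).2 (integrableOn_const (hμS i))

theorem integral_finset_sum_indicator_const [NormedSpace ℝ E] [CompleteSpace E] (s : Finset ι)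
    (hS : ∀ i, MeasurableSet (S i)) (hμS : ∀ i, μ (S i) ≠ ⊤) (c : ι → E) :
    ∫ x, ∑ i ∈ s, (S i).indicator (fun _ => c i) x ∂μ = ∑ i ∈ s, μ.real (S i) • c i := by
  rw [integral_finsetSum s fun i _ =>
    (integrable_indicator_iff (hS i)).2 (integrableOn_const (hμS i))]
  exact Finset.sum_congr rfl fun i _ => integral_indicator_const _ (hS i)

end IndicatorSum

theorem Complex.measureReal_ball (a : ℂ) {r : ℝ} (hr : 0 ≤ r) :
    volume.real (Metric.ball a r) = Real.pi * r ^ 2 := by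
  simp [measureReal_def, ENNReal.toReal_ofReal hr, mul_comm]

theorem Real.sq_mul_div_rpow {x a : ℝ} (hx : 0 < x) (ha : 0 ≤ a) (q : ℝ) :
    x ^ 2 * (a / x) ^ q = a ^ q * x ^ (2 - q) := by
  rw [Real.div_rpow ha hx.le, Real.rpow_sub hx, Real.rpow_two]
  have := Real.rpow_pos_of_pos hx q
  field_simp

theorem Real.two_pow_mul_sq_mul_div_rpow {x : ℝ} (hx : 0 < x) (q : ℝ) (j : ℕ) :
    (2 ^ j * x) ^ 2 * (2 / (2 ^ j * x)) ^ q = 2 ^ q * x ^ (2 - q) * ((2 : ℝ) ^ (2 - q)) ^ j := by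
  rw [Real.sq_mul_div_rpow (by positivity) zero_le_two, Real.mul_rpow (by positivity) hx.le,
    ← Real.rpow_pow_comm zero_le_two]
  ring

/-- The weighted modulus test function estimate: with `B j = B(2ʲ z₀, 2ʲ z₀)` and `ρ₀`
equal to `2/(2ʲ z₀)` on `B j \ B (j-1)` (and `0` outside `B n`), one has
`∫ ρ₀^{2p/(p-1)} dA ≤ c_p z₀^{-2/(p-1)}` with
`c_p = 4^{p/(p-1)} π / (1 - 2^{-2/(p-1)})`. -/
theorem test_function_estimate (z₀ p : ℝ) (hz₀ : 0 < z₀) (hp : 1 < p) (n : ℕ)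
    (B : ℕ → Set ℂ)
    (hB : ∀ j, B j = Metric.ball ((2 ^ j * z₀ : ℝ) : ℂ) (2 ^ j * z₀))
    (ρ₀ : ℂ → ℝ)
    (hρ₀_0 : ∀ z ∈ B 0, ρ₀ z = 2 / z₀)
    (hρ₀_j : ∀ j, 1 ≤ j → j ≤ n → ∀ z ∈ B j \ B (j - 1), ρ₀ z = 2 / (2 ^ j * z₀))
    (hρ₀_out : ∀ z ∉ B n, ρ₀ z = 0) :
    ∫ z : ℂ, (ρ₀ z) ^ (2 * p / (p - 1)) ≤
      (4 : ℝ) ^ (p / (p - 1)) * Real.pi / (1 - (2 : ℝ) ^ (-2 / (p - 1)))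
        * z₀ ^ (-2 / (p - 1)) := by
  have hp₁ : 0 < p - 1 := by linarith
  set q := 2 * p / (p - 1) with hq_def
  have h2q : 2 - q = -2 / (p - 1) := by rw [hq_def]; field_simp; ring
  have h4 : (4 : ℝ) ^ (p / (p - 1)) = 2 ^ q := by
    rw [show (4 : ℝ) = 2 ^ (2 : ℝ) by norm_num, ← Real.rpow_mul zero_le_two, hq_def, mul_div_assoc]
  have hr : (2 : ℝ) ^ (2 - q) < 1 := Real.rpow_lt_one_of_one_lt_of_neg one_lt_two
    (by rw [h2q]; exact div_neg_of_neg_of_pos (by norm_num) hp₁)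
  have hρ : IsLayered B n (fun j => (2 / (2 ^ j * z₀)) ^ q) (fun z => ρ₀ z ^ q) :=
    IsLayered.comp (f := (· ^ q)) ⟨fun z hz => by simpa using hρ₀_0 z hz, hρ₀_j, hρ₀_out⟩
      (Real.zero_rpow (by positivity))
  have hBm : ∀ j, MeasurableSet (B j) := fun j => hB j ▸ measurableSet_ball
  have hBfin : ∀ j, volume (B j) ≠ ⊤ := fun j => hB j ▸ measure_ball_lt_top.ne
  calc ∫ z, ρ₀ z ^ q
      ≤ ∫ z, ∑ j ∈ Finset.range (n + 1), (B j).indicator (fun _ => (2 / (2 ^ j * z₀)) ^ q) z :=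
        integral_mono_of_nonneg (ae_of_all _ (hρ.nonneg fun _ => by positivity))
          (integrable_finset_sum_indicator_const _ hBm hBfin _)
          (ae_of_all _ (hρ.le_sum_indicator fun _ => by positivity))
    _ = 2 ^ q * Real.pi * z₀ ^ (2 - q) * ∑ j ∈ Finset.range (n + 1), ((2 : ℝ) ^ (2 - q)) ^ j := by
        rw [integral_finset_sum_indicator_const _ hBm hBfin, Finset.mul_sum]
        refine Finset.sum_congr rfl fun j _ => ?_
        rw [hB j, Complex.measureReal_ball _ (by positivity), smul_eq_mul, mul_assoc,
          Real.two_pow_mul_sq_mul_div_rpow hz₀]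
        ring
    _ ≤ 2 ^ q * Real.pi * z₀ ^ (2 - q) * (1 / (1 - 2 ^ (2 - q))) := by
        refine mul_le_mul_of_nonneg_left ?_ (by positivity)
        rw [Finset.range_eq_Ico]
        exact (geom_sum_Ico_le_of_lt_one (by positivity) hr).trans_eq (by rw [pow_zero])
    _ = _ := by rw [h4, h2q]; ring
end

section
/- For \alpha \in \mathbb{R} and 0 < r < R, the annular rotation map \phi_A (equal to z for |z|>R, z e^{i\alpha\log(|z|/R)} for r\le|z|\le R, and z e^{i\alpha\log(r/R)} for |z|<r) is a homeomorphism of \mathbb{C} onto itself. -/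
/-!
On each circle `‖z‖ = t` the annular rotation is the rotation by the angle
`α log (clamp t / R)`, where `clamp t` is `t` cut off to `[r, R]`. Any map rotating every circle
about `0` by an angle depending continuously on the radius is a homeomorphism: it preserves `‖z‖`,
so rotating back by the same angle inverts it.
-/

open Complex

noncomputable def radialRotation (θ : ℝ → ℝ) (hθ : Continuous θ) : ℂ ≃ₜ ℂ where
  toFun z := z * exp (θ ‖z‖ * I)
  invFun z := z * exp (-θ ‖z‖ * I)
  left_inv z := by
    dsimp only
    rw [norm_mul, norm_exp_ofReal_mul_I, mul_one, mul_assoc, ← exp_add, neg_mul, add_neg_cancel,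
      exp_zero, mul_one]
  right_inv z := by
    dsimp only
    rw [norm_mul, ← ofReal_neg, norm_exp_ofReal_mul_I, mul_one, mul_assoc, ← exp_add, ofReal_neg,
      neg_mul, neg_add_cancel, exp_zero, mul_one]
  continuous_toFun := by fun_prop
  continuous_invFun := by fun_prop

theorem radialRotation_apply (θ : ℝ → ℝ) (hθ : Continuous θ) (z : ℂ) :
    radialRotation θ hθ z = z * exp (θ ‖z‖ * I) :=
  rfl

noncomputable def annularAngle (α r R t : ℝ) : ℝ :=
  α * Real.log (min (max t r) R / R)

theorem continuous_annularAngle (α : ℝ) {r R : ℝ} (hr : 0 < r) (hrR : r < R) :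
    Continuous (annularAngle α r R) := by
  refine continuous_const.mul (Continuous.log (by fun_prop) fun t => ?_)
  have hR : 0 < R := hr.trans hrR
  have : 0 < min (max t r) R := lt_min (hr.trans_le (le_max_right t r)) hR
  positivity

theorem annularAngle_of_le (α r : ℝ) {R t : ℝ} (ht : R ≤ t) : annularAngle α r R t = 0 := by
  rw [annularAngle, min_eq_right (ht.trans (le_max_left t r)), Real.log_div_self, mul_zero]

/-- The annular rotation map `φ_A` is a homeomorphism of `ℂ` onto itself. -/
theorem annular_rotation_homeomorph (α r R : ℝ) (hr : 0 < r) (hrR : r < R)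
    (φ : ℂ → ℂ)
    (hout : ∀ z : ℂ, R < ‖z‖ → φ z = z)
    (hmid : ∀ z : ℂ, r ≤ ‖z‖ → ‖z‖ ≤ R →
      φ z = z * Complex.exp (Complex.I * α * Real.log (‖z‖ / R)))
    (hin : ∀ z : ℂ, ‖z‖ < r →
      φ z = z * Complex.exp (Complex.I * α * Real.log (r / R))) :
    ∃ h : ℂ ≃ₜ ℂ, ⇑h = φ := by
  refine ⟨radialRotation _ (continuous_annularAngle α hr hrR), funext fun z => ?_⟩
  rw [radialRotation_apply]
  rcases lt_or_ge R ‖z‖ with hR | hR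
  · rw [hout z hR, annularAngle_of_le α r hR.le, ofReal_zero, zero_mul, exp_zero, mul_one]
  have rotate_eq (t : ℝ) (ht : min (max ‖z‖ r) R = t) :
      exp (annularAngle α r R ‖z‖ * I) = exp (I * α * Real.log (t / R)) := by
    rw [annularAngle, ht]
    congr 1
    push_cast
    ring
  rcases lt_or_ge ‖z‖ r with hz | hz
  · rw [hin z hz, rotate_eq r (by rw [max_eq_right hz.le, min_eq_left hrR.le])]
  · rw [hmid z hz hR, rotate_eq ‖z‖ (by rw [max_eq_left hz, min_eq_left hR])]
end

section
/- Let L \ge 1 and \gamma \in \mathbb{R} with |\gamma| = L - 1/L. Then the logarithmic spiral map g(z) = z e^{i\gamma\log|z|} (with g(0)=0) is L-bilipschitz on \mathbb{C}: for all z, w \in \mathbb{C}, L^{-1}|z-w| \le |g(z)-g(w)| \le L|z-w|. -/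
/-!
Away from the origin the differential of `g` at `z` is
`v ↦ e^{iγ log|z|} z (u + iγ Re u)` with `u = v / z`: up to rotations and the scaling by `|z|`,
it is the shear `(a, b) ↦ (a, b + γ a)`, whose operator norm is `L` precisely when
`|γ| = L - 1/L`. The mean value inequality then gives `|g z - g w| ≤ L |z - w|` along segments
avoiding `0`; a segment through `0` has length `|z| + |w|`, which already bounds
`|g z - g w|` since `|g z| = |z|`. The lower bound follows because the spiral map with
parameter `-γ` inverts `g`.
-/

open Complex

theorem sq_add_sq_shear_le {L γ : ℝ} (hL : 1 ≤ L) (hγ : |γ| ≤ L - 1 / L) (a b : ℝ) :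
    a ^ 2 + (b + γ * a) ^ 2 ≤ L ^ 2 * (a ^ 2 + b ^ 2) := by
  have hL0 : 0 < L := zero_lt_one.trans_le hL
  have hγL : |γ| * L ≤ L ^ 2 - 1 := by
    have := mul_le_mul_of_nonneg_right hγ hL0.le
    rwa [sub_mul, one_div, inv_mul_cancel₀ hL0.ne', ← sq] at this
  -- after multiplying by `L`, the cross term is absorbed by the weighted AM-GM inequality
  have hcross : 2 * L * γ * a * b ≤ |γ| * (a ^ 2 + L ^ 2 * b ^ 2) := by
    have hγab : γ * (a * b) ≤ |γ| * |a * b| := by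
      rw [← abs_mul]; exact le_abs_self _
    have hamgm : 2 * L * |a * b| ≤ a ^ 2 + L ^ 2 * b ^ 2 := by
      rw [abs_mul]; nlinarith [sq_nonneg (|a| - L * |b|), sq_abs a, sq_abs b]
    nlinarith [abs_nonneg γ]
  have ha : |γ| * (|γ| * L + 1) * a ^ 2 ≤ L * (L ^ 2 - 1) * a ^ 2 := by
    refine mul_le_mul_of_nonneg_right ?_ (sq_nonneg a)
    nlinarith [mul_le_mul_of_nonneg_left hγL (abs_nonneg γ), mul_le_mul_of_nonneg_left hγL hL0.le]
  have hb : |γ| * L ^ 2 * b ^ 2 ≤ L * (L ^ 2 - 1) * b ^ 2 := by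
    refine mul_le_mul_of_nonneg_right ?_ (sq_nonneg b)
    nlinarith [mul_le_mul_of_nonneg_left hγL hL0.le]
  have hexpand : L * (L ^ 2 * (a ^ 2 + b ^ 2) - (a ^ 2 + (b + γ * a) ^ 2))
      = L * (L ^ 2 - 1) * a ^ 2 + L * (L ^ 2 - 1) * b ^ 2 - 2 * L * γ * a * b
        - |γ| * |γ| * L * a ^ 2 := by
    rw [← sq, sq_abs]; ring
  have key : 0 ≤ L * (L ^ 2 * (a ^ 2 + b ^ 2) - (a ^ 2 + (b + γ * a) ^ 2)) := by
    rw [hexpand]; linarith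
  linarith [(mul_nonneg_iff_of_pos_left hL0).1 key]

theorem norm_add_I_mul_re_le {L γ : ℝ} (hL : 1 ≤ L) (hγ : |γ| ≤ L - 1 / L) (u : ℂ) :
    ‖u + I * γ * u.re‖ ≤ L * ‖u‖ := by
  rw [← pow_le_pow_iff_left₀ (norm_nonneg _) (by positivity) two_ne_zero, mul_pow,
    Complex.sq_norm, Complex.sq_norm, normSq_apply, normSq_apply]
  simpa [← sq, add_comm (γ * u.re)] using sq_add_sq_shear_le hL hγ u.re u.im

theorem hasFDerivAt_log_norm {E : Type*} [NormedAddCommGroup E] [InnerProductSpace ℝ E]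
    {z : E} (hz : z ≠ 0) :
    HasFDerivAt (fun w : E => Real.log ‖w‖) ((‖z‖ ^ 2)⁻¹ • innerSL ℝ z) z := by
  have hsq : HasFDerivAt (fun w : E => Real.log (‖w‖ ^ 2)) ((‖z‖ ^ 2)⁻¹ • 2 • innerSL ℝ z) z :=
    (hasStrictFDerivAt_norm_sq z).hasFDerivAt.log (by positivity)
  have half : (fun w : E => Real.log ‖w‖) = fun w => (2⁻¹ : ℝ) • Real.log (‖w‖ ^ 2) := by
    funext w; rw [Real.log_pow, smul_eq_mul]; push_cast; ring
  rw [half]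
  refine (hsq.const_smul (2⁻¹ : ℝ)).congr_fderiv ?_
  ext v; simp; ring

noncomputable def logSpiral (γ : ℝ) (z : ℂ) : ℂ :=
  z * exp (I * γ * Real.log ‖z‖)

theorem norm_logSpiral (γ : ℝ) (z : ℂ) : ‖logSpiral γ z‖ = ‖z‖ := by
  simp [logSpiral, norm_exp]

theorem logSpiral_neg_logSpiral (γ : ℝ) (z : ℂ) : logSpiral (-γ) (logSpiral γ z) = z := by
  rw [logSpiral, norm_logSpiral, logSpiral, mul_assoc, ← exp_add, ofReal_neg, mul_neg, neg_mul,
    add_neg_cancel, exp_zero, mul_one]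

theorem hasFDerivAt_logSpiral (γ : ℝ) {z : ℂ} (hz : z ≠ 0) :
    ∃ D : ℂ →L[ℝ] ℂ, HasFDerivAt (logSpiral γ) D z ∧
      ∀ v, D v = exp (I * γ * Real.log ‖z‖) * (v + I * γ * (v / z).re * z) := by
  have h := (hasFDerivAt_id z).mul'
    ((ofRealCLM.hasFDerivAt.comp z (hasFDerivAt_log_norm hz)).const_mul (I * γ)).cexp
  refine ⟨_, h, fun v => ?_⟩
  simp [div_re, normSq_eq_norm_sq]
  ring

theorem differentiableAt_logSpiral (γ : ℝ) {z : ℂ} (hz : z ≠ 0) :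
    DifferentiableAt ℝ (logSpiral γ) z :=
  let ⟨_, hD, _⟩ := hasFDerivAt_logSpiral γ hz
  hD.differentiableAt

theorem norm_fderiv_logSpiral_le {L γ : ℝ} (hL : 1 ≤ L) (hγ : |γ| ≤ L - 1 / L) {z : ℂ}
    (hz : z ≠ 0) : ‖fderiv ℝ (logSpiral γ) z‖ ≤ L := by
  obtain ⟨D, hD, hDv⟩ := hasFDerivAt_logSpiral γ hz
  rw [hD.fderiv]
  refine D.opNorm_le_bound (zero_le_one.trans hL) fun v => ?_
  have hshear : v + I * γ * (v / z).re * z = (v / z + I * γ * (v / z).re) * z := by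
    field_simp
  calc ‖D v‖ = ‖v / z + I * γ * (v / z).re‖ * ‖z‖ := by
        rw [hDv, hshear, norm_mul, norm_mul]
        simp [norm_exp]
    _ ≤ L * ‖v / z‖ * ‖z‖ := by gcongr; exact norm_add_I_mul_re_le hL hγ _
    _ = L * ‖v‖ := by rw [norm_div, mul_assoc, div_mul_cancel₀ _ (norm_ne_zero_iff.2 hz)]

theorem norm_logSpiral_sub_le {L γ : ℝ} (hL : 1 ≤ L) (hγ : |γ| ≤ L - 1 / L) (z w : ℂ) :
    ‖logSpiral γ z - logSpiral γ w‖ ≤ L * ‖z - w‖ := by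
  by_cases h0 : (0 : ℂ) ∈ segment ℝ w z
  · have hnorm : ‖z‖ + ‖w‖ = ‖z - w‖ := by
      simpa [dist_eq, add_comm, norm_sub_rev] using dist_add_dist_of_mem_segment h0
    calc ‖logSpiral γ z - logSpiral γ w‖ ≤ ‖z‖ + ‖w‖ := by
          simpa only [norm_logSpiral] using norm_sub_le (logSpiral γ z) (logSpiral γ w)
      _ = ‖z - w‖ := hnorm
      _ ≤ L * ‖z - w‖ := le_mul_of_one_le_left (norm_nonneg _) hL
  · have hne : ∀ x ∈ segment ℝ w z, x ≠ 0 := fun x hx h => h0 (h ▸ hx)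
    exact (convex_segment w z).norm_image_sub_le_of_norm_fderiv_le
      (fun x hx => differentiableAt_logSpiral γ (hne x hx))
      (fun x hx => norm_fderiv_logSpiral_le hL hγ (hne x hx))
      (left_mem_segment ℝ w z) (right_mem_segment ℝ w z)

/-- If `L ≥ 1` and `|γ| = L - 1/L`, the logarithmic spiral map `g(z) = z e^{iγ log|z|}`
(with `g 0 = 0`) is `L`-bilipschitz on `ℂ`. -/
theorem log_spiral_bilipschitz (L γ : ℝ) (hL : 1 ≤ L) (hγ : |γ| = L - 1 / L)
    (g : ℂ → ℂ)
    (hg : ∀ z : ℂ, z ≠ 0 →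
      g z = z * Complex.exp (Complex.I * γ * Real.log ‖z‖))
    (hg0 : g 0 = 0) :
    ∀ z w : ℂ,
      L⁻¹ * ‖z - w‖ ≤ ‖g z - g w‖ ∧
      ‖g z - g w‖ ≤ L * ‖z - w‖ := by
  have hg_eq : g = logSpiral γ := by
    funext z
    rcases eq_or_ne z 0 with rfl | hz
    · simp [hg0, logSpiral]
    · exact hg z hz
  intro z w
  subst hg_eq
  refine ⟨?_, norm_logSpiral_sub_le hL hγ.le z w⟩
  have hinv := norm_logSpiral_sub_le hL (abs_neg γ ▸ hγ.le) (logSpiral γ z) (logSpiral γ w)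
  rw [logSpiral_neg_logSpiral, logSpiral_neg_logSpiral] at hinv
  exact (inv_mul_le_iff₀ (zero_lt_one.trans_le hL)).2 hinv
end
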